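/- arXiv:1912.12088 — 2 statements merged into one kernel-verified Lean document; each statement's English description precedes it below -/
import Mathlib

section
/- Let G be a topological group, Z a finite normal subgroup of G, N a closed subgroup of G with N ∩ Z = {e}, and q : G → G/Z the quotient map. Then the restriction q|_N : N → q(N) is a topological group isomorphism onto its image (with the subspace topology from G/Z). -/
/-!
The quotient map `q : G → G ⧸ Z` is open, and `N` is open in its saturation
`q ⁻¹' (q '' N) = N * Z`: the remaining cosets `N * z`, `z ∈ Z \ {1}`, are finitely many closed
sets, disjoint from `N` because `N ⊓ Z = ⊥`. An open map that is injective on a set which is open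
in its saturation restricts to an embedding of that set.
-/

open Set Topology Pointwise

theorem Topology.IsEmbedding.domRestrict_of_isOpenMap {X Y : Type*} [TopologicalSpace X]
    [TopologicalSpace Y] {f : X → Y} (hf : Continuous f) (hfo : IsOpenMap f) {s B : Set X}
    (hinj : s.InjOn f) (hB : IsClosed B) (hsB : Disjoint s B) (hsat : f ⁻¹' (f '' s) ⊆ s ∪ B) :
    IsEmbedding (s.domRestrict f) := by
  refine ⟨⟨le_antisymm (hf.comp continuous_subtype_val).le_induced ?_⟩, hinj.injective⟩
  rintro _ ⟨V, hV, rfl⟩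
  refine ⟨f '' (V ∩ Bᶜ), hfo _ (hV.inter hB.isOpen_compl), ?_⟩
  ext ⟨x, hx⟩
  constructor
  · rintro ⟨a, ⟨haV, haB⟩, hax⟩
    have has : a ∈ s := (hsat ⟨x, hx, hax.symm⟩).resolve_right haB
    exact hinj hx has hax.symm ▸ haV
  · intro hxV
    exact ⟨x, ⟨hxV, hsB.subset_compl_right hx⟩, rfl⟩

theorem Set.mul_subset_union_mul_diff_one {M : Type*} [MulOneClass M] (s t : Set M) :
    s * t ⊆ s ∪ s * (t \ {1}) := by
  rintro _ ⟨a, ha, b, hb, rfl⟩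
  by_cases hb1 : b = 1
  · left
    simpa [hb1] using ha
  · exact Or.inr ⟨a, ha, b, ⟨hb, hb1⟩, rfl⟩

namespace Subgroup

variable {G : Type*} [Group G] {N Z : Subgroup G}

theorem injOn_mk_of_inf_eq_bot (hNZ : N ⊓ Z = ⊥) :
    (N : Set G).InjOn (QuotientGroup.mk : G → G ⧸ Z) := by
  intro x hx y hy hxy
  have hmem : x⁻¹ * y ∈ N ⊓ Z := ⟨N.mul_mem (N.inv_mem hx) hy, QuotientGroup.eq.mp hxy⟩
  rw [hNZ, mem_bot] at hmem
  exact inv_mul_eq_one.mp hmem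

theorem disjoint_mul_diff_one_of_inf_eq_bot (hNZ : N ⊓ Z = ⊥) :
    Disjoint (N : Set G) (N * ((Z : Set G) \ {1})) := by
  rw [Set.disjoint_left]
  rintro x hx ⟨n, hn, z, ⟨hz, hz1⟩, rfl⟩
  have hmem : z ∈ N ⊓ Z := ⟨by simpa using N.mul_mem (N.inv_mem hn) hx, hz⟩
  rw [hNZ, mem_bot] at hmem
  exact hz1 hmem

end Subgroup

theorem restriction_of_quotient_map_embedding_general
    (G : Type*) [Group G] [TopologicalSpace G] [IsTopologicalGroup G]
    (Z N : Subgroup G) (hZfin : (Z : Set G).Finite)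
    (hNcl : IsClosed (N : Set G)) (hNZ : N ⊓ Z = ⊥) :
    Topology.IsEmbedding (fun x : N => (QuotientGroup.mk (x : G) : G ⧸ Z)) := by
  have hclosed : IsClosed ((N : Set G) * ((Z : Set G) \ {1})) :=
    hNcl.mul_right_of_isCompact hZfin.sdiff.isCompact
  refine IsEmbedding.domRestrict_of_isOpenMap QuotientGroup.continuous_mk
    QuotientGroup.isOpenMap_coe (Subgroup.injOn_mk_of_inf_eq_bot hNZ) hclosed
    (Subgroup.disjoint_mul_diff_one_of_inf_eq_bot hNZ) ?_
  rw [QuotientGroup.preimage_image_mk_eq_mul]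
  exact Set.mul_subset_union_mul_diff_one _ _

/-- If `Z` is a finite normal subgroup of a topological group `G` and `N` is a closed
subgroup with `N ∩ Z = {e}`, then the quotient map `q : G → G/Z` restricted to `N` is a
topological group isomorphism onto its image `q(N)` (with the subspace topology): it is
injective and a topological embedding. -/
theorem restriction_of_quotient_map_embedding
    (G : Type*) [Group G] [TopologicalSpace G] [IsTopologicalGroup G]
    (Z N : Subgroup G) [Z.Normal] (hZfin : (Z : Set G).Finite)
    (hNcl : IsClosed (N : Set G)) (hNZ : N ⊓ Z = ⊥) :
    Topology.IsEmbedding (fun x : N => (QuotientGroup.mk (x : G) : G ⧸ Z)) :=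
  restriction_of_quotient_map_embedding_general G Z N hZfin hNcl hNZ
end

section
/- Merson's Lemma: Let (G, γ) be a topological group, H a subgroup of G, and γ₁ ⊆ γ a coarser group topology on G such that γ₁ and γ induce the same subspace topology on H and the same quotient topology on the coset space G/H. Then γ₁ = γ. -/
/-!
Since `γ` is finer, it suffices that every `γ`-neighbourhood `U` of `1` is a `γ₁`-neighbourhood.
Choose a `γ`-neighbourhood `V` of `1` with `V * V ⊆ U`, a `γ₁`-neighbourhood `O` of `1` with
`O ∩ H ⊆ V` (equal subspace topologies) and a `γ₁`-neighbourhood `S` of `1` with `S⁻¹ * S ⊆ O`.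
For `A` the `γ`-interior of `V ∩ S`, the saturated set `A * H` is `γ`-open, hence `γ₁`-open
(equal quotient topologies), and `S ∩ (A * H) ⊆ A * (S⁻¹ * S ∩ H) ⊆ V * V ⊆ U`.
-/

open Filter Topology Pointwise TopologicalSpace

theorem exists_mem_nhds_one_inv_mul_subset {G : Type*} [Group G] [TopologicalSpace G]
    [IsTopologicalGroup G] {O : Set G} (hO : O ∈ 𝓝 (1 : G)) :
    ∃ S ∈ 𝓝 (1 : G), S⁻¹ * S ⊆ O := by
  obtain ⟨V, hV, hVO⟩ := exists_nhds_split_inv hO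
  refine ⟨V⁻¹, inv_mem_nhds_one G hV, ?_⟩
  rintro _ ⟨a, ha, x, hx, rfl⟩
  simpa using hVO _ ha _ hx

namespace Subgroup

variable {G : Type*} [Group G] (H : Subgroup G)

theorem inter_mul_subset_mul_inv_mul_inter {A S : Set G} (hAS : A ⊆ S) :
    S ∩ (A * H) ⊆ A * (S⁻¹ * S ∩ H) := by
  rintro _ ⟨hxS, a, ha, h, hh, rfl⟩
  refine ⟨a, ha, h, ⟨?_, hh⟩, rfl⟩
  simpa using Set.mul_mem_mul (Set.inv_mem_inv.2 (hAS ha)) hxS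

theorem isOpen_mul_iff_of_coinduced_eq {t t' : TopologicalSpace G}
    (h : coinduced ((↑) : G → G ⧸ H) t = coinduced (↑) t') (A : Set G) :
    IsOpen[t] (A * H) ↔ IsOpen[t'] (A * H) := by
  rw [← QuotientGroup.preimage_image_mk_eq_mul, ← isOpen_coinduced, ← isOpen_coinduced, h]

theorem exists_mem_nhds_one_inter_subset_of_induced_eq {t t' : TopologicalSpace G}
    (h : induced ((↑) : H → G) t = induced (↑) t') {V : Set G} (hV : V ∈ @nhds G t' 1) :
    ∃ O ∈ @nhds G t 1, O ∩ H ⊆ V := by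
  have hVH : ((↑) : H → G) ⁻¹' V ∈ @nhds H (induced (↑) t) 1 := by
    rw [h, nhds_induced (T := t')]
    exact preimage_mem_comap hV
  rw [nhds_induced (T := t)] at hVH
  obtain ⟨O, hO, hOV⟩ := hVH
  exact ⟨O, hO, fun x ⟨hxO, hxH⟩ ↦ hOV (show (⟨x, hxH⟩ : H) ∈ (↑) ⁻¹' O from hxO)⟩

theorem nhds_one_le_of_induced_eq_of_coinduced_eq {γ γ₁ : TopologicalSpace G}
    (hγ : @ContinuousMul G γ _) (hγ₁ : @IsTopologicalGroup G γ₁ _) (hle : γ ≤ γ₁)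
    (hsub : induced ((↑) : H → G) γ₁ = induced (↑) γ)
    (hquot : coinduced ((↑) : G → G ⧸ H) γ₁ = coinduced (↑) γ) :
    @nhds G γ₁ 1 ≤ @nhds G γ 1 := by
  intro U hU
  obtain ⟨V, hVo, hV1, hVU⟩ := @exists_open_nhds_one_mul_subset G γ _ _ U hU
  obtain ⟨O, hO, hOV⟩ :=
    H.exists_mem_nhds_one_inter_subset_of_induced_eq hsub (@IsOpen.mem_nhds G γ _ _ hVo hV1)
  obtain ⟨S, hS, hSO⟩ := @exists_mem_nhds_one_inv_mul_subset G _ γ₁ hγ₁ O hO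
  set A := @interior G γ (V ∩ S)
  have hAH : IsOpen[γ₁] (A * H) :=
    (H.isOpen_mul_iff_of_coinduced_eq hquot A).2 <|
      @IsOpen.mul_right G γ _ _ _ _ (@isOpen_interior G γ _)
  have hA1 : (1 : G) ∈ A := @mem_interior_iff_mem_nhds G γ _ _ |>.2 <|
    inter_mem (@IsOpen.mem_nhds G γ _ _ hVo hV1) (nhds_mono hle hS)
  have hAV : A ⊆ V := (@interior_subset G γ _).trans Set.inter_subset_left
  have hAS : A ⊆ S := (@interior_subset G γ _).trans Set.inter_subset_right
  have hAH1 : A * H ∈ @nhds G γ₁ 1 :=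
    @IsOpen.mem_nhds G γ₁ _ _ hAH ⟨1, hA1, 1, H.one_mem, one_mul 1⟩
  refine mem_of_superset (inter_mem hS hAH1) ?_
  calc S ∩ (A * H) ⊆ A * (S⁻¹ * S ∩ H) := H.inter_mul_subset_mul_inv_mul_inter hAS
    _ ⊆ V * V := Set.mul_subset_mul hAV ((Set.inter_subset_inter_left _ hSO).trans hOV)
    _ ⊆ U := hVU

end Subgroup

/-- Merson's Lemma: if `γ₁ ⊆ γ` are group topologies on `G` (Hausdorff not assumed)
inducing the same subspace topology on a subgroup `H` and the same quotient topology
on the coset space `G/H`, then `γ₁ = γ`. -/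
theorem merson_lemma (G : Type*) [Group G] (γ γ₁ : TopologicalSpace G)
    (hγ : @IsTopologicalGroup G γ _) (hγ₁ : @IsTopologicalGroup G γ₁ _)
    (hcoarser : ∀ s : Set G, @IsOpen G γ₁ s → @IsOpen G γ s)
    (H : Subgroup G)
    (hsub : TopologicalSpace.induced ((↑) : H → G) γ₁ =
      TopologicalSpace.induced ((↑) : H → G) γ)
    (hquot : TopologicalSpace.coinduced (QuotientGroup.mk : G → G ⧸ H) γ₁ =
      TopologicalSpace.coinduced (QuotientGroup.mk : G → G ⧸ H) γ) :
    γ₁ = γ := by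
  have hle : γ ≤ γ₁ := hcoarser
  refine IsTopologicalGroup.ext hγ₁ hγ (le_antisymm ?_ (nhds_mono hle))
  exact H.nhds_one_le_of_induced_eq_of_coinduced_eq hγ.toContinuousMul hγ₁ hle hsub hquot
end
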